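/- Let K ≥ 2, λ ∈ (0,1), and for each k ∈ {1, …, K} define μ^(k) := λ e_k + ((1−λ)/K) 𝟙 ∈ ℝ^K. Set L := log(1 + Kλ/(1−λ)). Then for all k ≠ ℓ, the Aitchison distance satisfies d_A(μ^(k), μ^(ℓ)) = √2 · L; equivalently d_A(μ^(k), μ^(ℓ))² = 2L². -/

import Mathlib

/-- The Aitchison distance on the open probability simplex in `ℝ^K`:
`d_A(x, y) := sqrt((1/(2K)) Σ_{i,j} (log(x_i/x_j) − log(y_i/y_j))²)`. -/
noncomputable def aitchisonDist (K : ℕ) (x y : Fin K → ℝ) : ℝ :=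
  Real.sqrt ((1 / (2 * (K : ℝ))) *
    ∑ i, ∑ j, (Real.log (x i / x j) - Real.log (y i / y j)) ^ 2)

/-- The smoothed one-hot vector `μ^(k) := λ e_k + ((1−λ)/K) 𝟙 ∈ ℝ^K`. -/
noncomputable def smoothOneHot (K : ℕ) (lam : ℝ) (k : Fin K) : Fin K → ℝ :=
  fun i => lam * (if i = k then 1 else 0) + (1 - lam) / (K : ℝ)

/-! The log-ratio differences `log(x_i/x_j) − log(y_i/y_j)` are the differences `g_i − g_j` of
`g := log x − log y`, so `d_A(x, y)² = Σ g_i² − (Σ g_i)²/K` is the squared norm of the centred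
`g`. For the smoothed one-hot vectors `log μ^(k) = log((1−λ)/K) + L e_k`, so `g = L (e_k − e_ℓ)`
is already centred and has squared norm `2L²`. -/

open Real Finset

theorem sum_sum_sub_sq {ι R : Type*} [Fintype ι] [CommRing R] (g : ι → R) :
    ∑ i, ∑ j, (g i - g j) ^ 2 = 2 * Fintype.card ι * ∑ i, g i ^ 2 - 2 * (∑ i, g i) ^ 2 := by
  simp only [sub_sq, sum_add_distrib, sum_sub_distrib, sum_const, card_univ, nsmul_eq_mul,
    ← mul_sum, ← sum_mul]
  ring

theorem aitchisonDist_eq_sqrt {K : ℕ} {x y : Fin K → ℝ} (hx : ∀ i, x i ≠ 0) (hy : ∀ i, y i ≠ 0) :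
    aitchisonDist K x y = √(∑ i, (log (x i) - log (y i)) ^ 2
      - (∑ i, (log (x i) - log (y i))) ^ 2 / K) := by
  have hratio : ∀ i j, log (x i / x j) - log (y i / y j)
      = (log (x i) - log (y i)) - (log (x j) - log (y j)) := fun i j => by
    rw [log_div (hx i) (hx j), log_div (hy i) (hy j)]
    ring
  simp only [aitchisonDist, hratio, sum_sum_sub_sq, Fintype.card_fin]
  rcases K.eq_zero_or_pos with rfl | hK
  · simp
  · congr 1
    field_simp

section smoothOneHot

variable {K : ℕ} {lam : ℝ}

theorem smoothOneHot_pos (hlam₀ : 0 ≤ lam) (hlam₁ : lam < 1) (k i : Fin K) :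
    0 < smoothOneHot K lam k i := by
  have : 0 < (1 - lam) / K := div_pos (by linarith) (by exact_mod_cast i.pos)
  unfold smoothOneHot
  split_ifs <;> linarith

theorem log_smoothOneHot (hlam₀ : 0 ≤ lam) (hlam₁ : lam < 1) (k i : Fin K) :
    log (smoothOneHot K lam k i)
      = log ((1 - lam) / K) + if i = k then log (1 + K * lam / (1 - lam)) else 0 := by
  have hK : (K : ℝ) ≠ 0 := by exact_mod_cast i.pos.ne'
  have h1 : 0 < 1 - lam := by linarith
  have hL : 0 < 1 + K * lam / (1 - lam) := by
    have : 0 ≤ K * lam / (1 - lam) := by positivity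
    linarith
  unfold smoothOneHot
  split_ifs
  · rw [← log_mul (div_ne_zero h1.ne' hK) hL.ne']
    congr 1
    field_simp
    ring
  · simp

end smoothOneHot

theorem aitchisonDist_smoothOneHot_general
    (K : ℕ) (lam : ℝ) (hlam : lam ∈ Set.Ioo (0 : ℝ) 1)
    (k l : Fin K) (hkl : k ≠ l) :
    aitchisonDist K (smoothOneHot K lam k) (smoothOneHot K lam l)
        = Real.sqrt 2 * Real.log (1 + (K : ℝ) * lam / (1 - lam)) ∧
      (aitchisonDist K (smoothOneHot K lam k) (smoothOneHot K lam l)) ^ 2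
        = 2 * (Real.log (1 + (K : ℝ) * lam / (1 - lam))) ^ 2 := by
  obtain ⟨hlam₀, hlam₁⟩ := hlam
  set L := log (1 + K * lam / (1 - lam))
  have hL : 0 ≤ L := log_nonneg <| le_add_of_nonneg_right <|
    div_nonneg (mul_nonneg K.cast_nonneg hlam₀.le) (sub_nonneg.2 hlam₁.le)
  set g : Fin K → ℝ := fun i => (if i = k then L else 0) - (if i = l then L else 0)
  have hdiff : ∀ i, log (smoothOneHot K lam k i) - log (smoothOneHot K lam l i) = g i := by
    intro i
    rw [log_smoothOneHot hlam₀.le hlam₁, log_smoothOneHot hlam₀.le hlam₁]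
    ring
  have hsum : ∑ i, g i = 0 := by simp [g, sum_sub_distrib]
  have hsq : ∑ i, g i ^ 2 = 2 * L ^ 2 := by
    rw [Fintype.sum_eq_add k l hkl (by rintro i ⟨hik, hil⟩; simp [g, hik, hil])]
    simp only [g, ↓reduceIte, hkl, hkl.symm, sub_zero, zero_sub, even_two, Even.neg_pow]
    ring
  have hdist : aitchisonDist K (smoothOneHot K lam k) (smoothOneHot K lam l) = √2 * L := by
    rw [aitchisonDist_eq_sqrt (fun i => (smoothOneHot_pos hlam₀.le hlam₁ k i).ne')
      (fun i => (smoothOneHot_pos hlam₀.le hlam₁ l i).ne')]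
    simp only [hdiff, hsum, hsq]
    simp [sqrt_mul, sqrt_sq hL]
  refine ⟨hdist, ?_⟩
  rw [hdist, mul_pow, sq_sqrt zero_le_two]

/-- For `k ≠ ℓ`, the Aitchison distance between the smoothed one-hot vectors is
`d_A(μ^(k), μ^(ℓ)) = √2 · L`, equivalently `d_A(μ^(k), μ^(ℓ))² = 2L²`,
where `L := log(1 + Kλ/(1−λ))`. -/
theorem aitchisonDist_smoothOneHot
    (K : ℕ) (hK : 2 ≤ K) (lam : ℝ) (hlam : lam ∈ Set.Ioo (0 : ℝ) 1)
    (k l : Fin K) (hkl : k ≠ l) :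
    aitchisonDist K (smoothOneHot K lam k) (smoothOneHot K lam l)
        = Real.sqrt 2 * Real.log (1 + (K : ℝ) * lam / (1 - lam)) ∧
      (aitchisonDist K (smoothOneHot K lam k) (smoothOneHot K lam l)) ^ 2
        = 2 * (Real.log (1 + (K : ℝ) * lam / (1 - lam))) ^ 2 :=
  aitchisonDist_smoothOneHot_general K lam hlam k l hkl
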